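/- As ρ → ∞, the gap between the benchmark rate and the equal-power ZFBF-SUS sum rate satisfies C(ρ) − R_BF(ρ) = Σ_{i=1}^{M} log₂(1 + κ_i) + O(ρ^{-2}); that is, the function ρ ↦ ρ² · ( C(ρ) − R_BF(ρ) − Σ_{i=1}^{M} log₂(1 + κ_i) ) is bounded as ρ → ∞. -/

import Mathlib

open Matrix Filter Finset MeasureTheory

/-- The benchmark rate `C(ρ) = log₂ det(I + ρ C Cᴴ)` with `C = Λ^{1/2} L Q`. -/
noncomputable def benchRate (M m : ℕ) (lam : Fin M → ℝ)
    (L : Matrix (Fin M) (Fin M) ℂ) (Q : Matrix (Fin M) (Fin m) ℂ) (ρ : ℝ) : ℝ :=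
  Real.logb 2
    (((1 : Matrix (Fin M) (Fin M) ℂ) +
      (ρ : ℂ) • ((Matrix.diagonal (fun i => (Real.sqrt (lam i) : ℂ)) * L * Q) *
        (Matrix.diagonal (fun i => (Real.sqrt (lam i) : ℂ)) * L * Q)ᴴ)).det).re

/-- The equal-power ZFDPC-SUS sum rate `R_DPC(ρ) = Σ_i log₂(1 + ρ λ_i |l_{i,i}|²)`. -/
noncomputable def rateDPC (M : ℕ) (lam : Fin M → ℝ)
    (L : Matrix (Fin M) (Fin M) ℂ) (ρ : ℝ) : ℝ :=
  ∑ i, Real.logb 2 (1 + ρ * lam i * Complex.normSq (L i i))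

/-- The equal-power ZFBF-SUS sum rate `R_BF(ρ) = Σ_i log₂(1 + ρ λ_i / ‖t_i‖²)`,
where `‖t_i‖² = Σ_j |t_{j,i}|²` is the squared norm of the `i`-th column of `T = L⁻¹`. -/
noncomputable def rateBF (M : ℕ) (lam : Fin M → ℝ)
    (L : Matrix (Fin M) (Fin M) ℂ) (ρ : ℝ) : ℝ :=
  ∑ i, Real.logb 2 (1 + ρ * lam i / ∑ j, Complex.normSq (L⁻¹ j i))

/-- `κ_i = Σ_{j>i} |t_{j,i}|²/|t_{i,i}|²` where `T = L⁻¹`. -/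
noncomputable def kappa (M : ℕ) (L : Matrix (Fin M) (Fin M) ℂ) (i : Fin M) : ℝ :=
  ∑ j ∈ Finset.univ.filter (fun j => i < j),
    Complex.normSq (L⁻¹ j i) / Complex.normSq (L⁻¹ i i)

/-- `η_i = Σ_{j<i} |l_{i,j}|²/|l_{i,i}|²`. -/
noncomputable def eta (M : ℕ) (L : Matrix (Fin M) (Fin M) ℂ) (i : Fin M) : ℝ :=
  ∑ j ∈ Finset.univ.filter (fun j => j < i),
    Complex.normSq (L i j) / Complex.normSq (L i i)

/-!
Put `S = Λ^{1/2} L`. Since `Q Qᴴ = I`, `C Cᴴ = S Sᴴ`, a positive definite matrix whose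
eigenvalues `μ_i` satisfy `∏ μ_i = |det S|² = ∏ λ_i |l_{i,i}|²` and
`∑ μ_i⁻¹ = tr (S Sᴴ)⁻¹ = ‖S⁻¹‖_F² = ∑ (1 + κ_i) / (λ_i |l_{i,i}|²)`, the last step because
`t_{i,i} = 1 / l_{i,i}` gives `‖t_i‖² = (1 + κ_i) / |l_{i,i}|²`. Thus `C(ρ) = ∑ log₂ (1 + ρ μ_i)`
and `R_BF(ρ) + ∑ log₂ (1 + κ_i) = ∑ log₂ ((1 + κ_i) + ρ λ_i |l_{i,i}|²)`. Expanding
`log (b + ρ a) = log a + log ρ + b / (a ρ) + O(ρ⁻²)`, the `log a` terms cancel because the products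
agree and the `1 / ρ` terms cancel because the sums agree.
-/

namespace Real

lemma abs_log_one_add_sub_self_le_sq {x : ℝ} (hx : 0 ≤ x) : |log (1 + x) - x| ≤ x ^ 2 := by
  have hpos : 0 < 1 + x := by linarith
  have hupper : log (1 + x) ≤ x := by linarith [log_le_sub_one_of_pos hpos]
  have hlower : x - x ^ 2 ≤ log (1 + x) := by
    have hfrac : 1 - (1 + x)⁻¹ = x / (1 + x) := by field_simp; ring
    have hquad : x - x ^ 2 ≤ x / (1 + x) := by
      rw [le_div_iff₀ hpos]
      nlinarith [sq_nonneg x]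
    linarith [one_sub_inv_le_log_of_pos hpos]
  rw [abs_le]
  constructor <;> nlinarith

lemma abs_sq_mul_log_one_add_div_sub_le {x ρ : ℝ} (hx : 0 ≤ x) (hρ : 0 < ρ) :
    |ρ ^ 2 * (log (1 + x / ρ) - x / ρ)| ≤ x ^ 2 := by
  rw [abs_mul, abs_of_pos (by positivity)]
  calc ρ ^ 2 * |log (1 + x / ρ) - x / ρ| ≤ ρ ^ 2 * (x / ρ) ^ 2 := by
        gcongr; exact abs_log_one_add_sub_self_le_sq (by positivity)
    _ = x ^ 2 := by field_simp

lemma sum_log_add_mul_eq {ι : Type*} [Fintype ι] {a b : ι → ℝ} (ha : ∀ i, 0 < a i)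
    (hb : ∀ i, 0 ≤ b i) {ρ : ℝ} (hρ : 0 < ρ) :
    ∑ i, log (b i + ρ * a i) = log (∏ i, a i) + Fintype.card ι * log ρ + (∑ i, b i / a i) / ρ
      + ∑ i, (log (1 + b i / a i / ρ) - b i / a i / ρ) := by
  have hterm : ∀ i, log (b i + ρ * a i) = log (a i) + log ρ + log (1 + b i / a i / ρ) := by
    intro i
    have h1 : 0 < 1 + b i / a i / ρ := by have := hb i; have := ha i; positivity
    rw [← log_mul (ha i).ne' hρ.ne', ← log_mul (by have := ha i; positivity) h1.ne']
    congr 1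
    field_simp [(ha i).ne', hρ.ne']
    ring
  rw [log_prod fun i _ => (ha i).ne', sum_div, sum_congr rfl fun i _ => hterm i]
  simp only [sum_add_distrib, sum_sub_distrib, sum_const, card_univ, nsmul_eq_mul]
  ring

theorem abs_sq_mul_sum_log_add_mul_sub_le {ι : Type*} [Fintype ι] {a b a' b' : ι → ℝ}
    (ha : ∀ i, 0 < a i) (hb : ∀ i, 0 ≤ b i) (ha' : ∀ i, 0 < a' i) (hb' : ∀ i, 0 ≤ b' i)
    (hprod : ∏ i, a i = ∏ i, a' i) (hsum : ∑ i, b i / a i = ∑ i, b' i / a' i)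
    {ρ : ℝ} (hρ : 0 < ρ) :
    |ρ ^ 2 * (∑ i, log (b i + ρ * a i) - ∑ i, log (b' i + ρ * a' i))|
      ≤ ∑ i, (b i / a i) ^ 2 + ∑ i, (b' i / a' i) ^ 2 := by
  rw [sum_log_add_mul_eq ha hb hρ, sum_log_add_mul_eq ha' hb' hρ, hprod, hsum]
  have hc : ∀ i, 0 ≤ b i / a i := fun i => div_nonneg (hb i) (ha i).le
  have hc' : ∀ i, 0 ≤ b' i / a' i := fun i => div_nonneg (hb' i) (ha' i).le
  calc _ = |∑ i, ρ ^ 2 * (log (1 + b i / a i / ρ) - b i / a i / ρ)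
          - ∑ i, ρ ^ 2 * (log (1 + b' i / a' i / ρ) - b' i / a' i / ρ)| := by
        rw [← mul_sum, ← mul_sum]; ring_nf
    _ ≤ ∑ i, |ρ ^ 2 * (log (1 + b i / a i / ρ) - b i / a i / ρ)|
          + ∑ i, |ρ ^ 2 * (log (1 + b' i / a' i / ρ) - b' i / a' i / ρ)| :=
        (abs_sub _ _).trans (add_le_add (abs_sum_le_sum_abs _ _) (abs_sum_le_sum_abs _ _))
    _ ≤ _ := add_le_add
        (sum_le_sum fun i _ => abs_sq_mul_log_one_add_div_sub_le (hc i) hρ)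
        (sum_le_sum fun i _ => abs_sq_mul_log_one_add_div_sub_le (hc' i) hρ)

end Real

namespace Matrix

lemma mul_mul_conjTranspose_of_mul_conjTranspose_eq_one {α l n m : Type*} [Semiring α]
    [StarRing α] [Fintype n] [Fintype m] [DecidableEq n] {Q : Matrix n m α} (hQ : Q * Qᴴ = 1)
    (S : Matrix l n α) : (S * Q) * (S * Q)ᴴ = S * Sᴴ := by
  rw [conjTranspose_mul, Matrix.mul_assoc, ← Matrix.mul_assoc Q, hQ, Matrix.one_mul]

variable {n : Type*} [Fintype n]

lemma trace_conjTranspose_mul_self_eq_sum_normSq {m : Type*} [Fintype m] (X : Matrix m n ℂ) :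
    (Xᴴ * X).trace = ((∑ i, ∑ k, Complex.normSq (X k i) : ℝ) : ℂ) := by
  simp only [trace, diag, mul_apply, conjTranspose_apply, Complex.ofReal_sum,
    Complex.normSq_eq_conj_mul_self]
  rfl

variable [DecidableEq n]

lemma BlockTriangular.inv_apply_self {K α : Type*} [Field K] [LinearOrder α] {L : Matrix n n K}
    {b : n → α} (hL : L.BlockTriangular b) (hb : Function.Injective b) (hdet : IsUnit L.det)
    (i : n) : L⁻¹ i i = (L i i)⁻¹ := by
  have := L.invertibleOfIsUnitDet hdet
  have hinv := blockTriangular_inv_of_blockTriangular hL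
  have h1 : ∑ k, L⁻¹ i k * L k i = 1 := by
    rw [← mul_apply, nonsing_inv_mul L hdet, one_apply_eq]
  rw [sum_eq_single i] at h1
  · exact eq_inv_of_mul_eq_one_left h1
  · intro k _ hk
    rcases (hb.ne hk).lt_or_gt with h | h
    · rw [hinv h, zero_mul]
    · rw [hL h, mul_zero]
  · simp

lemma inv_diagonal_mul_apply {K : Type*} [Field K] {d : n → K} (hd : ∀ i, d i ≠ 0)
    (L : Matrix n n K) (k i : n) : (diagonal d * L)⁻¹ k i = L⁻¹ k i * (d i)⁻¹ := by
  have hinv : (diagonal d)⁻¹ = diagonal fun i => (d i)⁻¹ :=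
    inv_eq_right_inv (by simp [diagonal_mul_diagonal, hd])
  rw [mul_inv_rev, hinv, mul_diagonal]

namespace IsHermitian

variable {𝕜 : Type*} [RCLike 𝕜] {A : Matrix n n 𝕜}

lemma det_one_add_smul (hA : A.IsHermitian) (c : 𝕜) :
    (1 + c • A).det = ∏ i, (1 + c * hA.eigenvalues i) := by
  set U := hA.eigenvectorUnitary
  conv_lhs => rw [hA.spectral_theorem, ← map_one (Unitary.conjStarAlgAut 𝕜 _ U), ← map_smul,
    ← map_add, Unitary.conjStarAlgAut_apply, det_mul, det_mul, mul_right_comm, ← det_mul,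
    Unitary.mul_star_self_of_mem U.2, det_one, one_mul, ← diagonal_one, ← diagonal_smul,
    diagonal_add, det_diagonal]
  simp

lemma trace_inv (hA : A.IsHermitian) (h : ∀ i, hA.eigenvalues i ≠ 0) :
    A⁻¹.trace = ∑ i, ((hA.eigenvalues i)⁻¹ : 𝕜) := by
  set U := hA.eigenvectorUnitary
  have hdiag : diagonal (RCLike.ofReal ∘ hA.eigenvalues)
      * diagonal (fun i => (hA.eigenvalues i : 𝕜)⁻¹) = 1 := by
    simp [diagonal_mul_diagonal, h]
  conv_lhs => rw [hA.spectral_theorem]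
  rw [inv_eq_right_inv (B := Unitary.conjStarAlgAut 𝕜 _ U
      (diagonal fun i => (hA.eigenvalues i : 𝕜)⁻¹)) (by rw [← map_mul, hdiag, map_one]),
    Unitary.conjStarAlgAut_apply, trace_mul_cycle, Unitary.coe_star_mul_self, one_mul,
    trace_diagonal]

end IsHermitian

lemma prod_eigenvalues_mul_conjTranspose_self (S : Matrix n n ℂ) :
    ∏ i, (isHermitian_mul_conjTranspose_self S).eigenvalues i = Complex.normSq S.det := by
  have h := (isHermitian_mul_conjTranspose_self S).det_eq_prod_eigenvalues
  rw [det_mul, det_conjTranspose, Complex.star_def, Complex.mul_conj] at h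
  have := h.symm
  simp only [Complex.coe_algebraMap] at this
  exact_mod_cast this

open scoped ComplexOrder in
lemma eigenvalues_mul_conjTranspose_self_pos {S : Matrix n n ℂ} (hS : IsUnit S.det) (i : n) :
    0 < (isHermitian_mul_conjTranspose_self S).eigenvalues i :=
  (PosDef.mul_conjTranspose_self S
    (vecMul_injective_of_isUnit ((isUnit_iff_isUnit_det S).2 hS))).eigenvalues_pos i

lemma sum_inv_eigenvalues_mul_conjTranspose_self {S : Matrix n n ℂ} (hS : IsUnit S.det) :
    ∑ i, ((isHermitian_mul_conjTranspose_self S).eigenvalues i)⁻¹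
      = ∑ i, ∑ k, Complex.normSq (S⁻¹ k i) := by
  have h := (isHermitian_mul_conjTranspose_self S).trace_inv fun i =>
    (eigenvalues_mul_conjTranspose_self_pos hS i).ne'
  rw [mul_inv_rev, ← conjTranspose_nonsing_inv, trace_conjTranspose_mul_self_eq_sum_normSq] at h
  have := h.symm
  simp only [Complex.coe_algebraMap, Complex.ofReal_sum] at this
  exact_mod_cast this

end Matrix

lemma kappa_nonneg (M : ℕ) (L : Matrix (Fin M) (Fin M) ℂ) (i : Fin M) : 0 ≤ kappa M L i :=
  sum_nonneg fun _ _ => div_nonneg (Complex.normSq_nonneg _) (Complex.normSq_nonneg _)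

lemma sum_normSq_inv_apply_eq {M : ℕ} {L : Matrix (Fin M) (Fin M) ℂ}
    (hL : L.IsLowerTriangular) (hdiag : ∀ i, L i i ≠ 0) (i : Fin M) :
    ∑ j, Complex.normSq (L⁻¹ j i) = (1 + kappa M L i) / Complex.normSq (L i i) := by
  have hdet : IsUnit L.det := by
    rw [det_of_isLowerTriangular L hL, isUnit_iff_ne_zero]
    exact prod_ne_zero_iff.2 fun i _ => hdiag i
  have := L.invertibleOfIsUnitDet hdet
  have hinv : L⁻¹.IsLowerTriangular := blockTriangular_inv_of_blockTriangular hL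
  have hii : Complex.normSq (L⁻¹ i i) = (Complex.normSq (L i i))⁻¹ := by
    rw [hL.inv_apply_self OrderDual.toDual.injective hdet, Complex.normSq_inv]
  have hupper : ∑ j ∈ univ.filter (fun j => ¬ i < j), Complex.normSq (L⁻¹ j i)
      = Complex.normSq (L⁻¹ i i) := by
    refine sum_eq_single_of_mem i (by simp) fun j hj hji => ?_
    rw [hinv (show j < i from lt_of_le_of_ne (not_lt.1 (mem_filter.1 hj).2) hji), map_zero]
  have hl : Complex.normSq (L i i) ≠ 0 := (Complex.normSq_pos.2 (hdiag i)).ne'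
  rw [← sum_filter_add_sum_filter_not univ (fun j => i < j), hupper, kappa, hii]
  simp only [div_inv_eq_mul, ← sum_mul]
  field_simp
  ring

lemma rateBF_add_sum_logb_one_add_kappa {M : ℕ} {lam : Fin M → ℝ} (hlam : ∀ i, 0 ≤ lam i)
    {L : Matrix (Fin M) (Fin M) ℂ} (hL : L.IsLowerTriangular) (hdiag : ∀ i, L i i ≠ 0)
    {ρ : ℝ} (hρ : 0 ≤ ρ) :
    rateBF M lam L ρ + ∑ i, Real.logb 2 (1 + kappa M L i)
      = ∑ i, Real.logb 2 ((1 + kappa M L i) + ρ * (lam i * Complex.normSq (L i i))) := by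
  rw [rateBF, ← sum_add_distrib]
  refine sum_congr rfl fun i _ => ?_
  have hκ : 0 < 1 + kappa M L i := by linarith [kappa_nonneg M L i]
  have hl : 0 < Complex.normSq (L i i) := Complex.normSq_pos.2 (hdiag i)
  have hBF : 0 < 1 + ρ * lam i / ∑ j, Complex.normSq (L⁻¹ j i) := by
    rw [sum_normSq_inv_apply_eq hL hdiag i]
    have := hlam i
    positivity
  rw [← Real.logb_mul hBF.ne' hκ.ne', sum_normSq_inv_apply_eq hL hdiag i]
  congr 1
  field_simp

lemma benchRate_eq_sum_logb {M m : ℕ} (lam : Fin M → ℝ) (L : Matrix (Fin M) (Fin M) ℂ)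
    {Q : Matrix (Fin M) (Fin m) ℂ} (hQ : Q * Qᴴ = 1) {ρ : ℝ} (hρ : 0 ≤ ρ) :
    benchRate M m lam L Q ρ = ∑ i, Real.logb 2 (1 + ρ * (isHermitian_mul_conjTranspose_self
      (diagonal (fun i => (√(lam i) : ℂ)) * L)).eigenvalues i) := by
  rw [benchRate, mul_mul_conjTranspose_of_mul_conjTranspose_eq_one hQ,
    (isHermitian_mul_conjTranspose_self _).det_one_add_smul, ← Real.logb_prod _ _ fun i _ => by
      have := eigenvalues_self_mul_conjTranspose_nonneg (diagonal (fun i => (√(lam i) : ℂ)) * L) i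
      positivity]
  simp only [Complex.coe_algebraMap]
  norm_cast

lemma normSq_det_diagonal_sqrt_mul {M : ℕ} {lam : Fin M → ℝ} (hlam : ∀ i, 0 ≤ lam i)
    {L : Matrix (Fin M) (Fin M) ℂ} (hL : L.IsLowerTriangular) :
    Complex.normSq (diagonal (fun i => (√(lam i) : ℂ)) * L).det
      = ∏ i, lam i * Complex.normSq (L i i) := by
  rw [det_mul, det_diagonal, det_of_isLowerTriangular L hL, ← prod_mul_distrib, map_prod]
  refine prod_congr rfl fun i _ => ?_
  rw [Complex.normSq_mul, Complex.normSq_ofReal, Real.mul_self_sqrt (hlam i)]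

lemma sum_normSq_inv_diagonal_sqrt_mul_apply {M : ℕ} {lam : Fin M → ℝ} (hlam : ∀ i, 0 < lam i)
    {L : Matrix (Fin M) (Fin M) ℂ} (hL : L.IsLowerTriangular) (hdiag : ∀ i, L i i ≠ 0)
    (i : Fin M) :
    ∑ k, Complex.normSq ((diagonal (fun i => (√(lam i) : ℂ)) * L)⁻¹ k i)
      = (1 + kappa M L i) / (lam i * Complex.normSq (L i i)) := by
  have hd : ∀ i, (√(lam i) : ℂ) ≠ 0 := fun i => by exact_mod_cast (Real.sqrt_pos.2 (hlam i)).ne'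
  simp only [inv_diagonal_mul_apply hd, Complex.normSq_mul, Complex.normSq_inv,
    Complex.normSq_ofReal, Real.mul_self_sqrt (hlam i).le, ← sum_mul,
    sum_normSq_inv_apply_eq hL hdiag i]
  field_simp

theorem highSNR_gap_ZFBF_general
    (M m : ℕ)
    (lam : Fin M → ℝ) (hlam : ∀ i, 0 < lam i)
    (L : Matrix (Fin M) (Fin M) ℂ)
    (hLtri : ∀ i j : Fin M, i < j → L i j = 0)
    (hLdiag : ∀ i : Fin M, L i i ≠ 0)
    (Q : Matrix (Fin M) (Fin m) ℂ) (hQ : Q * Qᴴ = 1) :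
    ∃ B : ℝ, ∀ᶠ ρ : ℝ in atTop,
      |ρ ^ 2 * (benchRate M m lam L Q ρ - rateBF M lam L ρ -
        ∑ i, Real.logb 2 (1 + kappa M L i))| ≤ B := by
  have hL : L.IsLowerTriangular := fun i j h => hLtri i j h
  set S := diagonal (fun i => (√(lam i) : ℂ)) * L
  set μ := (isHermitian_mul_conjTranspose_self S).eigenvalues
  set a : Fin M → ℝ := fun i => lam i * Complex.normSq (L i i)
  have ha : ∀ i, 0 < a i := fun i => mul_pos (hlam i) (Complex.normSq_pos.2 (hLdiag i))
  have hdetS : Complex.normSq S.det = ∏ i, a i :=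
    normSq_det_diagonal_sqrt_mul (fun i => (hlam i).le) hL
  have hS : IsUnit S.det := isUnit_iff_ne_zero.2 fun h => (prod_pos fun i _ => ha i).ne' <| by
    rw [← hdetS, h, map_zero]
  have hprod : ∏ i, μ i = ∏ i, a i := (prod_eigenvalues_mul_conjTranspose_self S).trans hdetS
  have hsum : ∑ i, 1 / μ i = ∑ i, (1 + kappa M L i) / a i := by
    simp only [one_div]
    rw [sum_inv_eigenvalues_mul_conjTranspose_self hS]
    exact sum_congr rfl fun i _ => sum_normSq_inv_diagonal_sqrt_mul_apply hlam hL hLdiag i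
  refine ⟨(∑ i, (1 / μ i) ^ 2 + ∑ i, ((1 + kappa M L i) / a i) ^ 2) / Real.log 2, ?_⟩
  filter_upwards [eventually_gt_atTop 0] with ρ hρ
  have hgap : benchRate M m lam L Q ρ - rateBF M lam L ρ - ∑ i, Real.logb 2 (1 + kappa M L i)
      = (∑ i, Real.log (1 + ρ * μ i) - ∑ i, Real.log ((1 + kappa M L i) + ρ * a i))
        / Real.log 2 := by
    rw [sub_sub, rateBF_add_sum_logb_one_add_kappa (fun i => (hlam i).le) hL hLdiag hρ.le,
      benchRate_eq_sum_logb lam L hQ hρ.le]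
    simp only [Real.logb, ← sum_div, sub_div]
    rfl
  rw [hgap, mul_div_assoc', abs_div, abs_of_pos (Real.log_pos one_lt_two)]
  gcongr
  exact Real.abs_sq_mul_sum_log_add_mul_sub_le (b := fun _ => 1)
    (eigenvalues_mul_conjTranspose_self_pos hS) (fun _ => zero_le_one) ha
    (fun i => by linarith [kappa_nonneg M L i]) hprod hsum hρ

/-- High-SNR gap for ZFBF-SUS:
`C(ρ) − R_BF(ρ) = Σ_i log₂(1 + κ_i) + O(ρ⁻²)` as `ρ → ∞`. -/
theorem highSNR_gap_ZFBF
    (M m : ℕ) (hM : 1 ≤ M) (hm : M ≤ m)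
    (lam : Fin M → ℝ) (hlam : ∀ i, 0 < lam i)
    (L : Matrix (Fin M) (Fin M) ℂ)
    (hLtri : ∀ i j : Fin M, i < j → L i j = 0)
    (hLdiag : ∀ i : Fin M, L i i ≠ 0)
    (Q : Matrix (Fin M) (Fin m) ℂ) (hQ : Q * Qᴴ = 1) :
    ∃ B : ℝ, ∀ᶠ ρ : ℝ in atTop,
      |ρ ^ 2 * (benchRate M m lam L Q ρ - rateBF M lam L ρ -
        ∑ i, Real.logb 2 (1 + kappa M L i))| ≤ B :=
  highSNR_gap_ZFBF_general M m lam hlam L hLtri hLdiag Q hQ
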